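/- arXiv:1404.2963 — 2 statements merged into one kernel-verified Lean document; each statement's English description precedes it below -/
import Mathlib

section
/- Let ω be a homogeneous integrable 1-form of degree e with i_Rω = 0, and X a homogeneous polynomial vector field of degree a − e. Then the pair (i_Xω, (a·i_X dω + e·d i_Xω)/e) satisfies the graded unfolding equation in degree a: a·(i_Xω)·dω = e·ω ∧ ((a·i_X dω + e·d i_Xω)/e − d(i_Xω)). -/
open MvPolynomial Finset

noncomputable section

/-- An `r`-form on `ℂ^m` with polynomial coefficients, represented by its
(intendedly alternating) coefficient function `(i₁,…,i_r) ↦ τ_{i₁…i_r}`. -/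
abbrev Form (m r : ℕ) : Type := (Fin r → Fin m) → MvPolynomial (Fin m) ℂ

/-- The coefficient function is alternating. -/
def IsAlt {m r : ℕ} (τ : Form m r) : Prop :=
  ∀ (f : Fin r → Fin m) (σ : Equiv.Perm (Fin r)),
    τ (f ∘ σ) = ((Equiv.Perm.sign σ : ℤˣ) : ℤ) • τ f

/-- `τ` is a homogeneous `r`-form of total degree `p` (each `xᵢ` and each `dxᵢ`
has degree `1`, so the polynomial coefficients are homogeneous of degree `p - r`). -/
def IsHomog {m : ℕ} (r p : ℕ) (τ : Form m r) : Prop :=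
  ∀ f, (τ f).IsHomogeneous (p - r)

/-- Wedge product of forms (antisymmetrized product). -/
def wedge {m r s : ℕ} (τ : Form m r) (σ : Form m s) : Form m (r + s) :=
  fun f => (((r.factorial * s.factorial : ℕ) : ℂ))⁻¹ •
    ∑ π : Equiv.Perm (Fin (r + s)),
      ((Equiv.Perm.sign π : ℤˣ) : ℤ) •
        (τ (fun i => f (π (Fin.castAdd s i))) * σ (fun j => f (π (Fin.natAdd r j))))

/-- Exterior derivative. -/
def extd {m r : ℕ} (τ : Form m r) : Form m (r + 1) :=
  fun f => ∑ i : Fin (r + 1),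
    (-1 : ℤ) ^ (i : ℕ) • MvPolynomial.pderiv (f i) (τ (f ∘ i.succAbove))

/-- Contraction (interior product) with the radial vector field `R = Σ xᵢ ∂/∂xᵢ`. -/
def ctr {m r : ℕ} (τ : Form m (r + 1)) : Form m r :=
  fun f => ∑ j : Fin m, MvPolynomial.X j * τ (Fin.cons j f)

/-- Contraction with a polynomial vector field `X = Σ Xᵢ ∂/∂xᵢ`. -/
def ctrX {m r : ℕ} (X : Fin m → MvPolynomial (Fin m) ℂ) (τ : Form m (r + 1)) : Form m r :=
  fun f => ∑ j : Fin m, X j * τ (Fin.cons j f)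

/-- A polynomial regarded as a `0`-form. -/
def const {m : ℕ} (h : MvPolynomial (Fin m) ℂ) : Form m 0 := fun _ => h

/-- Reindexing a form along an equality of ranks. -/
def castF {m r s : ℕ} (h : r = s) (τ : Form m r) : Form m s :=
  fun f => τ (f ∘ Fin.cast h)

/-- `d (i_R τ)`, defined for forms of any rank (it is `0` on `0`-forms). -/
def dIR {m : ℕ} : {r : ℕ} → Form m r → Form m r
  | 0, _ => 0
  | _ + 1, τ => extd (ctr τ)

/-- `i_R (d τ)`, defined for forms of any rank. -/
def iRd {m r : ℕ} (τ : Form m r) : Form m r := ctr (extd τ)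

/-- The operator `ω △ τ := ω ∧ dτ + κ · dω ∧ τ`. -/
def triangle {m : ℕ} (ω : Form m 1) (κ : ℂ) {r : ℕ} (τ : Form m r) : Form m (r + 2) :=
  castF (by omega) (wedge ω (extd τ)) + κ • castF (by omega) (wedge (extd ω) τ)

end

/-! Contracting the integrability condition `ω ∧ dω = 0` with `X` and using the Leibniz rule
`i_X (α ∧ β) = (i_X α) β - α ∧ i_X β` gives `(i_X ω) dω = ω ∧ i_X dω`. The second component of
the pair is `(a/e) i_X dω`, so both sides of the unfolding equation equal `a ω ∧ i_X dω`. -/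

section

open Equiv

variable {m : ℕ}

lemma perm_fin_two_eq (σ : Perm (Fin 2)) : σ = 1 ∨ σ = swap 0 1 := by
  revert σ; decide

lemma sum_perm_fin_two {M : Type*} [AddCommMonoid M] (F : Perm (Fin 2) → M) :
    ∑ π, F π = F 1 + F (swap 0 1) := by
  rw [show (univ : Finset (Perm (Fin 2))) = {1, swap 0 1} by decide, sum_pair (by decide)]

lemma sum_perm_fin_three {M : Type*} [AddCommMonoid M] (F : Perm (Fin 3) → M) :
    ∑ π, F π = F 1 + F (swap 0 1) + F (swap 0 2) + F (swap 1 2) + F (swap 0 1 * swap 1 2) +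
      F (swap 0 2 * swap 1 2) := by
  rw [show (univ : Finset (Perm (Fin 3))) =
      {1, swap 0 1, swap 0 2, swap 1 2, swap 0 1 * swap 1 2, swap 0 2 * swap 1 2} by decide]
  rw [sum_insert (by decide), sum_insert (by decide), sum_insert (by decide),
    sum_insert (by decide), sum_insert (by decide), sum_singleton]
  abel

lemma apply_eq_of_fin_one (α : Form m 1) (g : Fin 1 → Fin m) : α g = α fun _ => g 0 :=
  congrArg α (funext fun k => by rw [Subsingleton.elim k 0])

lemma extd_one_apply (α : Form m 1) (f : Fin 2 → Fin m) :
    extd α f = pderiv (f 0) (α fun _ => f 1) - pderiv (f 1) (α fun _ => f 0) := by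
  simp [extd, Fin.sum_univ_two, apply_eq_of_fin_one α (f ∘ _), sub_eq_add_neg]

lemma isAlt_extd_one (α : Form m 1) : IsAlt (extd α) := by
  intro f σ
  rcases perm_fin_two_eq σ with rfl | rfl
  · simp
  · simp [extd_one_apply]

lemma wedge_const_apply_of_isAlt {s : ℕ} (g : MvPolynomial (Fin m) ℂ) {β : Form m s}
    (hβ : IsAlt β) (f : Fin (0 + s) → Fin m) :
    wedge (const g) β f = g * β (f ∘ Fin.cast (zero_add s).symm) := by
  have hterm : ∀ π : Perm (Fin (0 + s)),
      ((Perm.sign π : ℤˣ) : ℤ) • (const g (fun i => f (π (Fin.castAdd s i))) *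
        β (fun j => f (π (Fin.natAdd 0 j)))) = g * β (f ∘ Fin.cast (zero_add s).symm) := by
    intro π
    have hcomp : (fun j => f (π (Fin.natAdd 0 j))) =
        (f ∘ Fin.cast (zero_add s).symm) ∘ (finCongr (zero_add s)).permCongr π := by
      funext j
      simp [Equiv.permCongr_apply]
    rw [hcomp, hβ, Perm.sign_permCongr, mul_smul_comm, smul_smul, ← Units.val_mul, ← sq,
      Int.units_sq, Units.val_one, one_smul, const]
  simp only [wedge, hterm, Finset.sum_const, Finset.card_univ, Fintype.card_perm,
    Fintype.card_fin, zero_add, Nat.factorial_zero, one_mul]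
  rw [← Nat.cast_smul_eq_nsmul ℂ, smul_smul,
    inv_mul_cancel₀ (Nat.cast_ne_zero.mpr s.factorial_ne_zero), one_smul]

lemma wedge_one_one_apply (α τ : Form m 1) (f : Fin 2 → Fin m) :
    wedge α τ f = α (fun _ => f 0) * τ (fun _ => f 1) - α (fun _ => f 1) * τ (fun _ => f 0) := by
  simp [wedge, sum_perm_fin_two, apply_eq_of_fin_one α, apply_eq_of_fin_one τ,
    sub_eq_add_neg]

def coeff2 (β : Form m 2) (i j : Fin m) : MvPolynomial (Fin m) ℂ := β ![i, j]

lemma apply_eq_coeff2 (β : Form m 2) (g : Fin 2 → Fin m) : β g = coeff2 β (g 0) (g 1) :=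
  congrArg β (funext fun k => by fin_cases k <;> rfl)

lemma coeff2_swap {β : Form m 2} (hβ : IsAlt β) (i j : Fin m) :
    coeff2 β j i = -coeff2 β i j := by
  simpa [Perm.sign_swap, apply_eq_coeff2 β] using hβ ![i, j] (swap 0 1)

lemma wedge_one_two_apply_of_isAlt (α : Form m 1) {β : Form m 2} (hβ : IsAlt β)
    (f : Fin 3 → Fin m) :
    wedge α β f = ∑ i : Fin 3, (-1 : ℤ) ^ (i : ℕ) • (α (fun _ => f i) * β (f ∘ i.succAbove)) := by
  have hsucc : (Fin.succAbove 2 0 : Fin 3) = 0 ∧ (Fin.succAbove 2 1 : Fin 3) = 1 := ⟨rfl, rfl⟩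
  rw [wedge, sum_perm_fin_three]
  simp only [apply_eq_coeff2 β, Fin.sum_univ_three]
  simp only [Fin.isValue, Fin.reduceCastAdd, Fin.reduceNatAdd, Perm.coe_one,
    Perm.coe_mul, Function.comp_apply, id_eq, swap_apply_left, swap_apply_right,
    swap_apply_of_ne_of_ne, ne_eq, Fin.reduceEq, not_false_eq_true, apply_eq_of_fin_one α]
  simp only [Perm.sign_one, Perm.sign_swap', Perm.sign_mul, Fin.reduceEq, ↓reduceIte,
    Units.val_one, Units.val_neg, Units.val_mul, Int.reduceNeg, Int.reduceMul, one_smul, neg_smul,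
    Fin.val_zero, Fin.val_one, Fin.val_two, pow_zero, pow_one, even_two, Even.neg_pow, one_pow,
    Fin.succAbove_zero, Fin.succ_zero_eq_one, Fin.succ_one_eq_two, Fin.one_succAbove_zero,
    Fin.one_succAbove_one, hsucc, Nat.factorial_one, Nat.factorial_two]
  -- each term comes from two permutations differing by a swap of the last two slots of `β`,
  -- which cancels the normalising factor `1 / (1! * 2!)`
  rw [coeff2_swap hβ (f 0) (f 1), coeff2_swap hβ (f 1) (f 2), coeff2_swap hβ (f 0) (f 2)]
  simp only [mul_neg, neg_neg]
  module

lemma ctrX_wedge_one_two (X : Fin m → MvPolynomial (Fin m) ℂ) (α : Form m 1) {β : Form m 2}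
    (hβ : IsAlt β) :
    ctrX X (wedge α β : Form m (1 + 2)) =
      (∑ j, X j * α (fun _ => j)) • β - wedge α (ctrX X β) := by
  funext f
  simp only [ctrX, wedge_one_two_apply_of_isAlt α hβ, wedge_one_one_apply, Pi.sub_apply,
    Pi.smul_apply, smul_eq_mul, apply_eq_coeff2 β, Fin.sum_univ_three]
  have hcons : ∀ j, (Fin.cons j f : Fin 3 → Fin m) 2 = f 1 := fun _ => rfl
  have hsucc : (Fin.succAbove 2 0 : Fin 3) = 0 ∧ (Fin.succAbove 2 1 : Fin 3) = 1 := ⟨rfl, rfl⟩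
  simp only [mul_sum, sum_mul, ← sum_sub_distrib]
  refine sum_congr rfl fun j _ => ?_
  simp only [Fin.val_zero, Fin.val_one, Fin.val_two, pow_zero, pow_one, even_two, Even.neg_pow,
    one_pow, one_smul, neg_smul, Function.comp_apply, Fin.cons_zero, Fin.cons_one, hcons,
    Fin.succAbove_zero, Fin.succ_zero_eq_one, Fin.succ_one_eq_two, Fin.one_succAbove_zero,
    Fin.one_succAbove_one, hsucc]
  ring

lemma wedge_smul_right {r s : ℕ} (τ : Form m r) (c : ℂ) (σ : Form m s) :
    wedge τ (c • σ) = c • wedge τ σ := by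
  funext f
  simp only [wedge, Pi.smul_apply, mul_smul_comm, smul_sum, smul_comm c]

lemma smul_extd_eq_wedge_ctrX_extd {ω : Form m 1} (hint : wedge ω (extd ω) = 0)
    (X : Fin m → MvPolynomial (Fin m) ℂ) :
    (∑ j, X j * ω (fun _ => j)) • extd ω = wedge ω (ctrX X (extd ω)) := by
  have h := congrArg (fun τ : Form m (1 + 2) => ctrX X τ) hint
  simp only [ctrX_wedge_one_two X ω (isAlt_extd_one ω)] at h
  rw [← sub_eq_zero, h]
  funext f
  simp [ctrX]

end

theorem trivial_unfoldings_from_vector_fields_general {m a e : ℕ} (he : 1 ≤ e)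
    (ω : Form m 1)
    (hint : wedge ω (extd ω) = 0)
    (X : Fin m → MvPolynomial (Fin m) ℂ) :
    (a : ℂ) • wedge (const (∑ i, X i * ω (fun _ => i))) (extd ω) =
      (e : ℂ) • wedge ω
        ((((e : ℂ))⁻¹ • ((a : ℂ) • ctrX X (extd ω) +
            (e : ℂ) • extd (const (∑ i, X i * ω (fun _ => i))))) -
          extd (const (∑ i, X i * ω (fun _ => i)))) := by
  set G := ∑ i, X i * ω (fun _ => i)
  have he0 : (e : ℂ) ≠ 0 := Nat.cast_ne_zero.mpr (by omega)
  have hsecond : (e : ℂ)⁻¹ • ((a : ℂ) • ctrX X (extd ω) + (e : ℂ) • extd (const G)) -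
      extd (const G) = ((a : ℂ) / e) • ctrX X (extd ω) := by
    rw [smul_add, smul_smul, smul_smul, inv_mul_cancel₀ he0, one_smul, add_sub_cancel_right,
      inv_mul_eq_div]
  have hconst : wedge (const G) (extd ω) = G • extd ω :=
    funext (wedge_const_apply_of_isAlt G (isAlt_extd_one ω))
  rw [hsecond, wedge_smul_right, hconst, smul_extd_eq_wedge_ctrX_extd hint, smul_smul,
    mul_div_cancel₀ _ he0]

/-- for a homogeneous vector field `X` of degree `a − e`
(components of degree `c`, `a + 1 = e + c`), the pair
`(i_X ω, (a·i_X dω + e·d i_X ω)/e)` satisfies the graded unfolding equation in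
degree `a`. -/
theorem trivial_unfoldings_from_vector_fields {m a e c : ℕ} (he : 1 ≤ e)
    (hc : a + 1 = e + c)
    (ω : Form m 1) (hω : IsHomog 1 e ω) (hR : ctr ω = 0)
    (hint : wedge ω (extd ω) = 0)
    (X : Fin m → MvPolynomial (Fin m) ℂ) (hX : ∀ i, (X i).IsHomogeneous c) :
    (a : ℂ) • wedge (const (∑ i, X i * ω (fun _ => i))) (extd ω) =
      (e : ℂ) • wedge ω
        ((((e : ℂ))⁻¹ • ((a : ℂ) • ctrX X (extd ω) +
            (e : ℂ) • extd (const (∑ i, X i * ω (fun _ => i))))) -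
          extd (const (∑ i, X i * ω (fun _ => i)))) :=
  trivial_unfoldings_from_vector_fields_general he ω hint X
end

section
/- Let ω be an integrable (ω∧dω = 0) homogeneous 1-form of degree e on ℂ^{n+1}, nonzero. Then dω is a 2-cycle in the Koszul complex of ω (i.e. ω∧dω = 0) but dω is not a Koszul boundary: there is no 1-form θ with dω = ω∧θ unless dω = 0; hence if dω ≠ 0 the second Koszul homology H²(K•(ω)) is nonzero. -/
open MvPolynomial Finset

/-! Contracting `dω = ω ∧ θ` with the radial field `R`: since `i_R ω = 0`, Cartan's formula and
Euler's identity give `i_R dω = e ω`, while `i_R (ω ∧ θ) = -(i_R θ) ω`. Hence `ω (e + i_R θ) = 0`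
in the domain `ℂ[x]`, which is absurd because `e + i_R θ` has constant term `e ≠ 0`. So no such
`θ` exists at all once `ω ≠ 0`. -/

section

variable {m : ℕ}

lemma ctr_rank_one_apply (ω : Form m 1) (x : Fin 0 → Fin m) :
    ctr ω x = ∑ j, X j * ω fun _ => j := by
  simp only [ctr]
  congr! 3 with j
  exact eq_const_of_subsingleton (α := Fin 1) _ 0

lemma constantCoeff_ctr {r : ℕ} (τ : Form m (r + 1)) (f : Fin r → Fin m) :
    constantCoeff (ctr τ f) = 0 := by
  simp [ctr]

lemma extd_zero {r : ℕ} : extd (0 : Form m r) = 0 := by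
  funext f
  simp [extd]

lemma extd_rank_zero_apply (τ : Form m 0) (f : Fin 1 → Fin m) :
    extd τ f = pderiv (f 0) (τ ![]) := by
  simp [extd, Subsingleton.elim (f ∘ _) ![]]

lemma extd_rank_one_apply (ω : Form m 1) (f : Fin 2 → Fin m) :
    extd ω f = pderiv (f 0) (ω fun _ => f 1) - pderiv (f 1) (ω fun _ => f 0) := by
  have h0 : f ∘ Fin.succ = fun _ => f 1 := eq_const_of_subsingleton (α := Fin 1) _ 0
  have h1 : f ∘ (1 : Fin 2).succAbove = fun _ => f 0 :=
    eq_const_of_subsingleton (α := Fin 1) _ 0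
  simp [extd, Fin.sum_univ_two, h0, h1, sub_eq_add_neg]

lemma wedge_rank_one_apply (ω θ : Form m 1) (f : Fin 2 → Fin m) :
    wedge ω θ f =
      ω (fun _ => f 0) * θ (fun _ => f 1) - ω (fun _ => f 1) * θ (fun _ => f 0) := by
  have hperm : (Finset.univ : Finset (Equiv.Perm (Fin 2))) = {Equiv.refl _, Equiv.swap 0 1} := by
    decide
  have hleft (π : Equiv.Perm (Fin 2)) :
      (fun i : Fin 1 => f (π (Fin.castAdd 1 i))) = fun _ => f (π 0) :=
    eq_const_of_subsingleton _ 0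
  have hright (π : Equiv.Perm (Fin 2)) :
      (fun i : Fin 1 => f (π (Fin.natAdd 1 i))) = fun _ => f (π 1) :=
    eq_const_of_subsingleton _ 0
  rw [wedge, hperm, Finset.sum_pair (by decide), hleft, hright, hleft, hright]
  simp [sub_eq_add_neg]

lemma pderiv_sum_X_mul (b : Fin m) (p : Fin m → MvPolynomial (Fin m) ℂ) :
    pderiv b (∑ j, X j * p j) = ∑ j, X j * pderiv b (p j) + p b := by
  simp [Finset.sum_add_distrib, pderiv_X, Pi.single_apply]

/-- Cartan's formula `i_R d + d i_R = L_R`, with `L_R = e` on forms of degree `e` by Euler. -/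
lemma ctr_extd_add_extd_ctr {e : ℕ} (he : 1 ≤ e) {ω : Form m 1} (hω : IsHomog 1 e ω) :
    ctr (extd ω) + extd (ctr ω) = e • ω := by
  funext g
  obtain ⟨b, rfl⟩ : ∃ b, g = fun _ => b := ⟨g 0, eq_const_of_subsingleton g 0⟩
  have hEuler : ∑ j, X j * pderiv j (ω fun _ => b) = (e - 1) • ω fun _ => b :=
    (hω _).sum_X_mul_pderiv
  rw [Pi.add_apply, Pi.smul_apply, extd_rank_zero_apply, ctr_rank_one_apply, pderiv_sum_X_mul,
    ctr]
  simp only [extd_rank_one_apply, Fin.cons_zero, Fin.cons_one, mul_sub, Finset.sum_sub_distrib,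
    hEuler]
  conv_rhs => rw [← Nat.sub_add_cancel he]
  rw [succ_nsmul]
  abel

lemma ctr_wedge_rank_one (ω θ : Form m 1) (g : Fin 1 → Fin m) :
    ctr (wedge ω θ) g = ctr ω ![] * θ g - ω g * ctr θ ![] := by
  obtain ⟨b, rfl⟩ : ∃ b, g = fun _ => b := ⟨g 0, eq_const_of_subsingleton g 0⟩
  rw [ctr_rank_one_apply, ctr_rank_one_apply, ctr]
  simp only [wedge_rank_one_apply, Fin.cons_zero, Fin.cons_one, mul_sub, Finset.sum_sub_distrib,
    Finset.sum_mul, Finset.mul_sum, mul_assoc, mul_left_comm]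

theorem extd_ne_wedge {e : ℕ} (he : 1 ≤ e) {ω : Form m 1} (hω : IsHomog 1 e ω)
    (hR : ctr ω = 0) (hne : ω ≠ 0) (θ : Form m 1) : extd ω ≠ wedge ω θ := by
  intro hθ
  obtain ⟨g, hg⟩ := Function.ne_iff.mp hne
  have hLHS : ctr (extd ω) g = e • ω g := by
    simpa [hR, extd_zero] using congrFun (ctr_extd_add_extd_ctr he hω) g
  have hRHS : ctr (wedge ω θ) g = -(ω g * ctr θ ![]) := by
    simp [ctr_wedge_rank_one, hR]
  have hprod : ω g * (e + ctr θ ![]) = 0 := by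
    rw [hθ, hRHS, nsmul_eq_mul] at hLHS
    linear_combination -hLHS
  have hconst := congrArg constantCoeff ((mul_eq_zero.mp hprod).resolve_left hg)
  rw [map_add, map_natCast, constantCoeff_ctr, add_zero, map_zero, Nat.cast_eq_zero] at hconst
  omega

end

/-- for a nonzero integrable homogeneous 1-form `ω`, `dω` is a
2-cycle of the Koszul complex of `ω`, but `dω = ω∧θ` forces `dω = 0`; hence if
`dω ≠ 0` then `dω` is not a Koszul boundary (so `H²(K•(ω)) ≠ 0`). -/
theorem dω_not_koszul_boundary {m e : ℕ} (he : 1 ≤ e)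
    (ω : Form m 1) (hω : IsHomog 1 e ω) (hR : ctr ω = 0)
    (hint : wedge ω (extd ω) = 0) (hne : ω ≠ 0) :
    wedge ω (extd ω) = 0 ∧
    (∀ θ : Form m 1, extd ω = wedge ω θ → extd ω = 0) ∧
    (extd ω ≠ 0 → ¬∃ θ : Form m 1, extd ω = wedge ω θ) :=
  ⟨hint, fun θ hθ => (extd_ne_wedge he hω hR hne θ hθ).elim,
    fun _ ⟨θ, hθ⟩ => extd_ne_wedge he hω hR hne θ hθ⟩
end
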